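/- Let a, b, c, d be nonnegative integers and let p be an integer. If p ≤ max(−d, −⌊(b+1)/2⌋) or p ≥ min(a+d, a+⌊(c+1)/2⌋), then E(a,b,c,d,p) = M(a,b,c), where M(a,b,c) is MacMahon's product. (Intrusions positioned 'too far away' from the hexagon do not change the number of lozenge tilings.) -/

import Mathlib

open Finset

noncomputable section

/-- Binomial coefficient with integer arguments, equal to `0` whenever `k < 0` or `k > n`. -/
def ibinom (n k : ℤ) : ℚ :=
  if 0 ≤ k ∧ k ≤ n then (n.toNat.choose k.toNat : ℚ) else 0

/-- The Pochhammer symbol (rising factorial) `x (x+1) ⋯ (x+n-1)`. -/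
def poch (x : ℚ) (n : ℕ) : ℚ := (ascPochhammer ℚ n).eval x

/-- MacMahon's product `M(a,b,c)`. -/
def macmahon (a b c : ℕ) : ℚ :=
  ∏ i ∈ Finset.range a,
    ((Nat.factorial i : ℚ) * (Nat.factorial (b + c + i) : ℚ)) /
      ((Nat.factorial (b + i) : ℚ) * (Nat.factorial (c + i) : ℚ))

/-- The matrix `Q(a,b,c,d,p)` (with `1`-based indices `i, j ∈ {1, …, a+d}`):
rows/columns with index `≤ a` are lateral, the rest are intrusive. -/
def Qmat (a b c d : ℕ) (p : ℤ) : Matrix (Fin (a + d)) (Fin (a + d)) ℚ :=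
  Matrix.of fun i j =>
    if (i : ℕ) < a then
      if (j : ℕ) < a then
        ibinom ((b : ℤ) + c) ((c : ℤ) - (((i : ℕ) : ℤ) + 1) + (((j : ℕ) : ℤ) + 1))
      else
        ibinom (2 * (((j : ℕ) : ℤ) - a + 1) - 1)
          ((((j : ℕ) : ℤ) - a + 1) - (((i : ℕ) : ℤ) + 1) + p)
    else
      if (j : ℕ) < a then
        ibinom ((b : ℤ) + c - 2 * (((i : ℕ) : ℤ) - a + 1) + 1)
          ((c : ℤ) - (((i : ℕ) : ℤ) - a + 1) + (((j : ℕ) : ℤ) + 1) - p)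
      else
        ibinom (2 * (((j : ℕ) : ℤ) - ((i : ℕ) : ℤ))) (((j : ℕ) : ℤ) - ((i : ℕ) : ℤ))

/-- `E(a,b,c,d,p) = det Q(a,b,c,d,p)`, the signed count of lozenge tilings of the
`(a,b,c)`-hexagon with an even intrusion of length `d` at position `p`. -/
def E (a b c d : ℕ) (p : ℤ) : ℚ := (Qmat a b c d p).det

/-!
Split the intrusive indices at `J = min d (-p)` (resp. `J = min d (p - a)` on the right). When `p`
is far away, the lateral rows vanish on the first `J` intrusive columns and the remaining intrusive
rows vanish on the lateral columns, so ordering the indices as "first `J` intrusive, lateral,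
remaining intrusive" makes `Q` block upper triangular. The intrusive block `C(2(j-i), j-i)` is
unitriangular, hence `E` is the determinant of the lateral Toeplitz block `C(b+c, c-i+j)`.
Multiplying it by the Pascal matrix gives `C(b+c+k, c+j) = (b+c+k)!/(b+k)! · (b+k)ⱼ/(c+j)!`, a
matrix of falling factorials (a Vandermonde determinant) scaled by diagonal matrices, whose
determinant is MacMahon's product.
-/

open scoped Nat

lemma ibinom_of_neg {n k : ℤ} (h : k < 0) : ibinom n k = 0 := by
  simp [ibinom, not_le.mpr h]

lemma ibinom_of_lt {n k : ℤ} (h : n < k) : ibinom n k = 0 := by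
  simp only [ibinom, ite_eq_right_iff]
  omega

lemma ibinom_natCast (n k : ℕ) : ibinom n k = n.choose k := by
  by_cases h : k ≤ n
  · simp [ibinom, h]
  · simp [ibinom, h, Nat.choose_eq_zero_of_lt (not_le.mp h)]

lemma sum_range_choose_mul_ibinom {k a : ℕ} (hk : k < a) (m n : ℕ) :
    ∑ i ∈ range a, (k.choose i : ℚ) * ibinom m ((n : ℤ) - i) = (k + m).choose n := by
  set f : ℕ → ℚ := fun i => k.choose i * ibinom m ((n : ℤ) - i)
  have hsum_a : ∑ i ∈ range a, f i = ∑ i ∈ range (a + n + 1), f i :=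
    sum_subset (range_subset_range.mpr (by omega)) fun i _ hi => by
      simp [f, Nat.choose_eq_zero_of_lt (hk.trans_le (not_lt.mp (mem_range.not.mp hi)))]
  have hsum_n : ∑ i ∈ range (n + 1), f i = ∑ i ∈ range (a + n + 1), f i :=
    sum_subset (range_subset_range.mpr (by omega)) fun i _ hi => by
      simp only [f, ibinom_of_neg (show (n : ℤ) - i < 0 by rw [mem_range] at hi; omega), mul_zero]
  rw [hsum_a, ← hsum_n, Nat.add_choose_eq, Finset.Nat.sum_antidiagonal_eq_sum_range_succ_mk,
    Nat.cast_sum]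
  refine sum_congr rfl fun i hi => ?_
  rw [mem_range] at hi
  simp only [f, show (n : ℤ) - i = ((n - i : ℕ) : ℤ) by omega, ibinom_natCast, Nat.cast_mul]

lemma choose_mul_factorial_mul_factorial_eq_mul_descFactorial (b c k j : ℕ) :
    (b + c + k).choose (c + j) * (c + j)! * (b + k)! = (b + c + k)! * (b + k).descFactorial j := by
  rcases le_or_gt j (b + k) with hj | hj
  · rw [← Nat.factorial_mul_descFactorial hj,
      ← Nat.choose_mul_factorial_mul_factorial (by omega : c + j ≤ b + c + k),
      show b + c + k - (c + j) = b + k - j by omega]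
    ring
  · simp [Nat.choose_eq_zero_of_lt (by omega : b + c + k < c + j),
      Nat.descFactorial_eq_zero_iff_lt.mpr hj]

lemma det_vandermonde_natCast (a : ℕ) :
    (Matrix.vandermonde fun i : Fin a => (i : ℚ)).det = ∏ i ∈ range a, (i ! : ℚ) := by
  cases a with
  | zero => simp
  | succ n =>
    rw [Matrix.det_vandermonde_id_eq_superFactorial, ← Nat.prod_range_succ_factorial, Nat.cast_prod]

lemma det_descFactorial (a b : ℕ) :
    (Matrix.of fun k j : Fin a => ((b + k).descFactorial j : ℚ)).det =
      ∏ i ∈ range a, (i ! : ℚ) := by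
  rw [← det_vandermonde_natCast, ← Matrix.det_vandermonde_add _ (b : ℚ),
    Matrix.det_eval_matrixOfPolynomials_eq_det_vandermonde _ (fun j => descPochhammer ℚ j)
      (fun j => descPochhammer_natDegree ℚ j) (fun j => monic_descPochhammer ℚ j)]
  congr with k j
  rw [add_comm, ← Nat.cast_add, descPochhammer_eval_eq_descFactorial]

lemma det_pascal (a : ℕ) : (Matrix.of fun k i : Fin a => ((k : ℕ).choose i : ℚ)).det = 1 := by
  rw [Matrix.det_of_isLowerTriangular]
  · simp
  · intro k i hki
    simp [Nat.choose_eq_zero_of_lt (show (k : ℕ) < i from hki)]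

lemma choose_eq_factorial_div_mul_inv_mul_descFactorial (b c k j : ℕ) :
    ((b + c + k).choose (c + j) : ℚ) =
      ((b + c + k)! / (b + k)! : ℚ) * (((c + j)! : ℚ)⁻¹ * (b + k).descFactorial j) := by
  have h : ((b + c + k).choose (c + j) : ℚ) * (c + j)! * (b + k)! =
      (b + c + k)! * (b + k).descFactorial j := by
    exact_mod_cast choose_mul_factorial_mul_factorial_eq_mul_descFactorial b c k j
  field_simp
  linear_combination h

lemma pascal_mul_ibinom_toeplitz (a b c : ℕ) :
    (Matrix.of fun k i : Fin a => ((k : ℕ).choose i : ℚ)) *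
        (Matrix.of fun i j : Fin a => ibinom ((b : ℤ) + c) ((c : ℤ) - (i : ℕ) + (j : ℕ))) =
      Matrix.of fun k j : Fin a => ((b + c + k).choose (c + j) : ℚ) := by
  ext k j
  have hshift : ∀ i : ℕ, ((c : ℤ) - i + (j : ℕ)) = ((c + j : ℕ) : ℤ) - i := fun i => by
    push_cast; ring
  simp only [Matrix.mul_apply, Matrix.of_apply, hshift, ← Nat.cast_add]
  rw [Fin.sum_univ_eq_sum_range
      (fun i => ((k : ℕ).choose i : ℚ) * ibinom ((b + c : ℕ) : ℤ) (((c + j : ℕ) : ℤ) - i)),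
    sum_range_choose_mul_ibinom k.isLt, add_comm (k : ℕ)]

lemma det_ibinom_toeplitz (a b c : ℕ) :
    (Matrix.of fun i j : Fin a => ibinom ((b : ℤ) + c) ((c : ℤ) - (i : ℕ) + (j : ℕ))).det =
      macmahon a b c := by
  calc _ = (Matrix.of fun k j : Fin a => ((b + c + k).choose (c + j) : ℚ)).det := by
        rw [← pascal_mul_ibinom_toeplitz, Matrix.det_mul, det_pascal, one_mul]
    _ = (∏ k : Fin a, ((b + c + k)! / (b + k)! : ℚ)) *
          ((∏ j : Fin a, ((c + j)! : ℚ)⁻¹) *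
            (Matrix.of fun k j : Fin a => ((b + k).descFactorial j : ℚ)).det) := by
        rw [← Matrix.det_mul_row, ← Matrix.det_mul_column]
        congr with k j
        simp only [Matrix.of_apply, choose_eq_factorial_div_mul_inv_mul_descFactorial]
    _ = macmahon a b c := by
        rw [det_descFactorial, macmahon,
          Fin.prod_univ_eq_prod_range (fun k => ((b + c + k)! / (b + k)! : ℚ)),
          Fin.prod_univ_eq_prod_range (fun j => (((c + j)! : ℚ))⁻¹), ← prod_mul_distrib,
          ← prod_mul_distrib]
        refine prod_congr rfl fun i _ => ?_
        field_simp

theorem Matrix.BlockTriangular.det_eq_det_toSquareBlock {m α R : Type*} [Fintype m]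
    [DecidableEq m] [CommRing R] [LinearOrder α] {M : Matrix m m R} {b : m → α}
    (hM : M.BlockTriangular b) (k : α) (hinj : ∀ i j, b i = b j → b i ≠ k → i = j)
    (hdiag : ∀ i, b i ≠ k → M i i = 1) :
    M.det = (M.toSquareBlock b k).det := by
  rw [hM.det]
  refine prod_eq_single k (fun l _ hlk => ?_) (fun hk => ?_)
  · have hone : M.toSquareBlock b l = 1 := by
      ext ⟨i, hi⟩ ⟨j, hj⟩
      obtain rfl := hinj i j (hi.trans hj.symm) (hi ▸ hlk)
      simp [Matrix.toSquareBlock_def, hdiag i (hi ▸ hlk)]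
    rw [hone, Matrix.det_one]
  · have : IsEmpty {i // b i = k} := ⟨fun i => hk (i.2 ▸ mem_image_of_mem b (mem_univ i.1))⟩
    exact Matrix.det_isEmpty

def blockIndex (a J i : ℕ) : ℕ := if i < a then a + J else if i < a + J then i else i + 1

lemma blockIndex_eq_iff {a J i : ℕ} : blockIndex a J i = a + J ↔ i < a := by
  unfold blockIndex; split_ifs <;> omega

section Qmat

variable {a b c d : ℕ} {p : ℤ} {i j : Fin (a + d)}

lemma Qmat_apply_of_lt_of_lt (hi : (i : ℕ) < a) (hj : (j : ℕ) < a) :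
    Qmat a b c d p i j = ibinom ((b : ℤ) + c) ((c : ℤ) - (i : ℕ) + (j : ℕ)) := by
  simp only [Qmat, Matrix.of_apply, hi, hj, if_true]
  ring_nf

lemma Qmat_apply_of_lt_of_le (hi : (i : ℕ) < a) (hj : a ≤ (j : ℕ)) :
    Qmat a b c d p i j =
      ibinom (2 * ((j : ℕ) - a + 1 : ℤ) - 1) (((j : ℕ) - a + 1 : ℤ) - ((i : ℕ) + 1) + p) := by
  simp [Qmat, hi, not_lt.mpr hj]

lemma Qmat_apply_of_le_of_lt (hi : a ≤ (i : ℕ)) (hj : (j : ℕ) < a) :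
    Qmat a b c d p i j =
      ibinom ((b : ℤ) + c - 2 * ((i : ℕ) - a + 1 : ℤ) + 1)
        (c - ((i : ℕ) - a + 1 : ℤ) + ((j : ℕ) + 1) - p) := by
  simp [Qmat, hj, not_lt.mpr hi]

lemma Qmat_apply_of_le_of_le (hi : a ≤ (i : ℕ)) (hj : a ≤ (j : ℕ)) :
    Qmat a b c d p i j = ibinom (2 * ((j : ℕ) - (i : ℕ) : ℤ)) ((j : ℕ) - (i : ℕ)) := by
  simp [Qmat, not_lt.mpr hi, not_lt.mpr hj]

lemma Qmat_blockTriangular (J : ℕ)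
    (hlat : ∀ i j : Fin (a + d), (i : ℕ) < a → a ≤ (j : ℕ) → (j : ℕ) < a + J →
      Qmat a b c d p i j = 0)
    (hintr : ∀ i j : Fin (a + d), a + J ≤ (i : ℕ) → (j : ℕ) < a → Qmat a b c d p i j = 0) :
    (Qmat a b c d p).BlockTriangular fun i => blockIndex a J i := by
  intro i j hij
  simp only [blockIndex] at hij
  by_cases hi : (i : ℕ) < a
  · exact hlat i j hi (by split_ifs at hij <;> omega) (by split_ifs at hij <;> omega)
  by_cases hj : (j : ℕ) < a
  · exact hintr i j (by split_ifs at hij <;> omega) hj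
  rw [Qmat_apply_of_le_of_le (not_lt.mp hi) (not_lt.mp hj)]
  exact ibinom_of_neg (by split_ifs at hij <;> omega)

lemma E_eq_macmahon_of_blocks_eq_zero (J : ℕ)
    (hlat : ∀ i j : Fin (a + d), (i : ℕ) < a → a ≤ (j : ℕ) → (j : ℕ) < a + J →
      Qmat a b c d p i j = 0)
    (hintr : ∀ i j : Fin (a + d), a + J ≤ (i : ℕ) → (j : ℕ) < a → Qmat a b c d p i j = 0) :
    E a b c d p = macmahon a b c := by
  have hinj : ∀ i j : Fin (a + d), blockIndex a J i = blockIndex a J j →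
      blockIndex a J i ≠ a + J → i = j := fun i j hij hi => by
    rw [Ne, blockIndex_eq_iff] at hi
    unfold blockIndex at hij
    ext; split_ifs at hij <;> omega
  have hdiag : ∀ i : Fin (a + d), blockIndex a J i ≠ a + J → Qmat a b c d p i i = 1 :=
      fun i hi => by
    rw [Ne, blockIndex_eq_iff, not_lt] at hi
    rw [Qmat_apply_of_le_of_le hi hi, sub_self, mul_zero]
    simpa using ibinom_natCast 0 0
  let e : Fin a ≃ {i : Fin (a + d) // blockIndex a J i = a + J} :=
    (Fin.castLEquiv (Nat.le_add_right a d)).trans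
      (Equiv.subtypeEquivRight fun _ => blockIndex_eq_iff.symm)
  rw [E, (Qmat_blockTriangular J hlat hintr).det_eq_det_toSquareBlock _ hinj hdiag,
    ← Matrix.det_submatrix_equiv_self e, ← det_ibinom_toeplitz]
  congr with k l
  exact Qmat_apply_of_lt_of_lt k.isLt l.isLt

lemma E_eq_macmahon_of_le (h : p ≤ max (-(d : ℤ)) (-(((b + 1) / 2 : ℕ) : ℤ))) :
    E a b c d p = macmahon a b c := by
  refine E_eq_macmahon_of_blocks_eq_zero (min d (-p).toNat) (fun i j hi hj hjJ => ?_)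
    (fun i j hi hj => ?_)
  · rw [Qmat_apply_of_lt_of_le hi hj]
    exact ibinom_of_neg (by omega)
  · have := i.isLt
    rw [Qmat_apply_of_le_of_lt (by omega) hj]
    exact ibinom_of_lt (by omega)

lemma E_eq_macmahon_of_ge (h : min ((a : ℤ) + d) ((a : ℤ) + (((c + 1) / 2 : ℕ) : ℤ)) ≤ p) :
    E a b c d p = macmahon a b c := by
  refine E_eq_macmahon_of_blocks_eq_zero (min d (p - a).toNat) (fun i j hi hj hjJ => ?_)
    (fun i j hi hj => ?_)
  · rw [Qmat_apply_of_lt_of_le hi hj]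
    exact ibinom_of_lt (by omega)
  · have := i.isLt
    rw [Qmat_apply_of_le_of_lt (by omega) hj]
    exact ibinom_of_neg (by omega)

end Qmat

/-- Intrusions positioned too far away from the hexagon do not change the number of
lozenge tilings. -/
theorem E_eq_macmahon_of_far (a b c d : ℕ) (p : ℤ)
    (h : p ≤ max (-(d : ℤ)) (-(((b + 1) / 2 : ℕ) : ℤ)) ∨
         min ((a : ℤ) + d) ((a : ℤ) + (((c + 1) / 2 : ℕ) : ℤ)) ≤ p) :
    E a b c d p = macmahon a b c :=
  h.elim E_eq_macmahon_of_le E_eq_macmahon_of_ge
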